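/- Let p ≥ 2, let f : ℝ^d → ℝ be convex and differentiable, attaining its minimum f* at x*, with R = sup{ ‖x − x*‖ : f(x) ≤ f(X_0) } finite. Let X : [0, ∞) → ℝ^d be a differentiable curve satisfying the rescaled gradient flow Ẋ_t = −∇f(X_t)/‖∇f(X_t)‖^{(p−2)/(p−1)} whenever ∇f(X_t) ≠ 0, and suppose f(X_t) > f* for all t in an interval. Then on that interval the energy functional E_t = (f(X_t) − f*)^{−1/(p−1)} is differentiable and satisfies Ė_t ≥ 1/((p−1) · R^{p/(p−1)}). -/

import Mathlib

/-!
Along the flow, `d/dt f(X_t) = -‖∇f(X_t)‖^q` with `q = p/(p-1)`, so `f(X_t)` decreases and `X_t`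
stays in the sublevel set of `f(X_0)`, whence `‖X_t - x*‖ ≤ R`. Convexity gives
`f(X_t) - f* ≤ ⟪∇f(X_t), X_t - x*⟫ ≤ ‖∇f(X_t)‖ R`, and the chain rule turns this into
`Ė_t = ‖∇f(X_t)‖^q / ((p-1) (f(X_t) - f*)^q) ≥ 1 / ((p-1) R^q)`.
-/

open scoped RealInnerProductSpace
open Real Set

noncomputable section

section InnerProductSpace

variable {E : Type*} [NormedAddCommGroup E] [InnerProductSpace ℝ E]

theorem inner_neg_one_div_norm_rpow_smul_self {g : E} (hg : g ≠ 0) (a : ℝ) :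
    ⟪g, -(1 / ‖g‖ ^ a) • g⟫ = -‖g‖ ^ (2 - a) := by
  have hg' : 0 < ‖g‖ := norm_pos_iff.2 hg
  rw [real_inner_smul_right, real_inner_self_eq_norm_sq, rpow_sub hg', ← rpow_natCast]
  push_cast
  ring

variable [CompleteSpace E] {f : E → ℝ}

theorem ConvexOn.sub_le_inner_gradient (hf : ConvexOn ℝ univ f) {x : E}
    (hfx : DifferentiableAt ℝ f x) (y : E) : f x - f y ≤ ⟪gradient f x, x - y⟫ := by
  have hline : ConvexOn ℝ univ (f ∘ AffineMap.lineMap (k := ℝ) x y) := by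
    simpa using hf.comp_affineMap (AffineMap.lineMap (k := ℝ) x y)
  have hderiv : HasDerivAt (f ∘ AffineMap.lineMap (k := ℝ) x y) ⟪gradient f x, y - x⟫ 0 := by
    have hfx' : HasFDerivAt (𝕜 := ℝ) f (InnerProductSpace.toDual ℝ E (gradient f x))
        (AffineMap.lineMap (k := ℝ) x y 0) := by
      simpa using hfx.hasGradientAt.hasFDerivAt
    simpa using hfx'.comp_hasDerivAt (0 : ℝ) AffineMap.hasDerivAt_lineMap
  have hslope := hline.le_slope_of_hasDerivAt (mem_univ 0) (mem_univ 1) one_pos hderiv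
  rw [slope_def_field] at hslope
  simp only [Function.comp_apply, AffineMap.lineMap_apply_zero, AffineMap.lineMap_apply_one]
    at hslope
  rw [← neg_sub y x, inner_neg_right]
  linarith

theorem ConvexOn.sub_le_norm_gradient_mul (hf : ConvexOn ℝ univ f) {x : E}
    (hfx : DifferentiableAt ℝ f x) (y : E) : f x - f y ≤ ‖gradient f x‖ * ‖x - y‖ :=
  (hf.sub_le_inner_gradient hfx y).trans (real_inner_le_norm _ _)

theorem hasDerivAt_comp_of_rescaled_gradient_flow {X X' : ℝ → E} {p t : ℝ} (hp : 1 < p)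
    (hf : DifferentiableAt ℝ f (X t)) (hX : HasDerivAt X (X' t) t)
    (hflow : gradient f (X t) ≠ 0 →
      X' t = -(1 / ‖gradient f (X t)‖ ^ ((p - 2) / (p - 1))) • gradient f (X t)) :
    HasDerivAt (fun u ↦ f (X u)) (-‖gradient f (X t)‖ ^ (p / (p - 1))) t := by
  have hp1 : p - 1 ≠ 0 := by linarith
  have hslope : ⟪gradient f (X t), X' t⟫ = -‖gradient f (X t)‖ ^ (p / (p - 1)) := by
    by_cases hg : gradient f (X t) = 0
    · simp [hg, zero_rpow (div_ne_zero (by linarith : p ≠ 0) hp1)]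
    · rw [hflow hg, inner_neg_one_div_norm_rpow_smul_self hg]
      congr 2
      field_simp
      ring
  exact hslope ▸ hf.hasGradientAt.hasFDerivAt.comp_hasDerivAt t hX

end InnerProductSpace

theorem antitoneOn_Ici_of_hasDerivAt_nonpos {φ φ' : ℝ → ℝ} {a : ℝ}
    (hφ : ∀ t ≥ a, HasDerivAt φ (φ' t) t) (hφ' : ∀ t ≥ a, φ' t ≤ 0) : AntitoneOn φ (Ici a) := by
  refine antitoneOn_of_hasDerivWithinAt_nonpos (f' := φ') (convex_Ici a)
    (fun t ht ↦ (hφ t ht).continuousAt.continuousWithinAt) (fun t ht ↦ ?_) (fun t ht ↦ ?_)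
  all_goals rw [interior_Ici] at ht
  · exact (hφ t (le_of_lt ht)).hasDerivWithinAt
  · exact hφ' t (le_of_lt ht)

theorem norm_sub_le_sSup_norm_sub {E : Type*} [SeminormedAddCommGroup E] {S : Set E}
    (hS : Bornology.IsBounded S) (x₀ : E) {y : E} (hy : y ∈ S) :
    ‖y - x₀‖ ≤ sSup {r : ℝ | ∃ y, y ∈ S ∧ r = ‖y - x₀‖} := by
  obtain ⟨C, hC⟩ := (Metric.isBounded_iff_subset_closedBall x₀).1 hS
  refine le_csSup ⟨C, ?_⟩ ⟨y, hy, rfl⟩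
  rintro r ⟨z, hz, rfl⟩
  simpa [dist_eq_norm] using hC hz

theorem HasDerivAt.rpow_neg_one_div_sub_one {φ : ℝ → ℝ} {φ' p t : ℝ} (hφ : HasDerivAt φ φ' t)
    (hφt : 0 < φ t) (hp : p ≠ 1) :
    HasDerivAt (fun u ↦ φ u ^ (-(1 / (p - 1)))) (-φ' / ((p - 1) * φ t ^ (p / (p - 1)))) t := by
  have hp' : p - 1 ≠ 0 := sub_ne_zero.2 hp
  convert hφ.rpow_const (p := -(1 / (p - 1))) (Or.inl hφt.ne') using 1
  have hexp : -(1 / (p - 1)) - 1 = -(p / (p - 1)) := by field_simp; ring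
  rw [hexp, rpow_neg hφt.le]
  field_simp

theorem one_div_mul_rpow_le_rpow_div {c q a G R : ℝ} (hc : 0 < c) (hq : 0 < q) (hG : 0 ≤ G)
    (ha : 0 < a) (haGR : a ≤ G * R) : 1 / (c * R ^ q) ≤ G ^ q / (c * a ^ q) := by
  have hGR : 0 < G * R := ha.trans_le haGR
  have hR : 0 < R := pos_of_mul_pos_right hGR hG
  have hpow : a ^ q ≤ G ^ q * R ^ q := mul_rpow hG hR.le ▸ rpow_le_rpow ha.le haGR hq.le
  rw [div_le_div_iff₀ (by positivity) (by positivity)]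
  nlinarith [rpow_pos_of_pos hR q]

theorem rescaled_gradient_flow_energy_increase
    (d : ℕ) (p : ℝ) (hp : 2 ≤ p)
    (f : EuclideanSpace ℝ (Fin d) → ℝ)
    (hconv : ConvexOn ℝ Set.univ f) (hdiff : Differentiable ℝ f)
    (xstar : EuclideanSpace ℝ (Fin d))
    (X X' : ℝ → EuclideanSpace ℝ (Fin d))
    (hX : ∀ t ≥ (0 : ℝ), HasDerivAt X (X' t) t)
    (hflow : ∀ t ≥ (0 : ℝ), gradient f (X t) ≠ 0 →
      X' t = -(1 / ‖gradient f (X t)‖ ^ ((p - 2) / (p - 1))) • gradient f (X t))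
    (R : ℝ)
    (hR : R = sSup {r : ℝ | ∃ y, f y ≤ f (X 0) ∧ r = ‖y - xstar‖})
    (hRfin : Bornology.IsBounded {y : EuclideanSpace ℝ (Fin d) | f y ≤ f (X 0)})
    (s : Set ℝ) (hs : s ⊆ Set.Ioi 0)
    (hpos : ∀ t ∈ s, f xstar < f (X t)) :
    ∀ t ∈ s, ∃ E' : ℝ,
      HasDerivAt (fun u : ℝ => (f (X u) - f xstar) ^ (-(1 / (p - 1)))) E' t ∧
        1 / ((p - 1) * R ^ (p / (p - 1))) ≤ E' := by
  have hp1 : 1 < p := by linarith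
  have hrate : ∀ u ≥ (0 : ℝ),
      HasDerivAt (fun v ↦ f (X v)) (-‖gradient f (X u)‖ ^ (p / (p - 1))) u :=
    fun u hu ↦ hasDerivAt_comp_of_rescaled_gradient_flow hp1 (hdiff _) (hX u hu) (hflow u hu)
  intro t ht
  have ht0 : 0 ≤ t := le_of_lt (hs ht)
  have hsub : f (X t) ≤ f (X 0) := antitoneOn_Ici_of_hasDerivAt_nonpos hrate
    (fun _ _ ↦ neg_nonpos.2 (by positivity)) self_mem_Ici ht0 ht0
  have hgap_pos : 0 < f (X t) - f xstar := sub_pos.2 (hpos t ht)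
  have hgap : f (X t) - f xstar ≤ ‖gradient f (X t)‖ * R :=
    (hconv.sub_le_norm_gradient_mul (hdiff _) xstar).trans <| mul_le_mul_of_nonneg_left
      (hR ▸ norm_sub_le_sSup_norm_sub hRfin xstar hsub) (norm_nonneg _)
  refine ⟨_, ((hrate t ht0).sub_const (f xstar)).rpow_neg_one_div_sub_one hgap_pos hp1.ne', ?_⟩
  rw [neg_neg]
  exact one_div_mul_rpow_le_rpow_div (by linarith) (by positivity) (norm_nonneg _) hgap_pos hgap
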